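/- Let E be a finite-dimensional real inner product space and let φ : E → ℝ be differentiable, L-smooth (gradient L-Lipschitz) and μ-strongly convex with μ > 0, attaining its minimum value φ*. Fix γ with 0 < γ ≤ 1/L. Let θ and ξ be random vectors in E on a probability space such that the conditional expectation of ξ given θ is zero and E[‖ξ‖²] ≤ σ². Then E[φ(θ − γ(∇φ(θ) + ξ))] − φ* ≤ (1 − μγ)(E[φ(θ)] − φ*) + (Lγ²/2) σ². -/

import Mathlib

/-!
The descent lemma, obtained by comparing `t ↦ φ (x + t • d)` with its quadratic majorant on
`[0, 1]`, bounds one step pointwise by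
`φ θ - γ/2 ‖φ' θ‖² + (Lγ² - γ) ⟪φ' θ, ξ⟫ + Lγ²/2 ‖ξ‖²` as soon as `γ L ≤ 1`.
The cross term has mean zero because `φ' θ` is `σ(θ)`-measurable and pulls out of `E[· | θ]`;
it is integrable since the same bound with `ξ = 0` gives `‖φ' θ‖² ≤ (2/γ) (φ θ - φ*)`.
Strong convexity yields the Polyak–Łojasiewicz inequality `2μ (φ θ - φ*) ≤ ‖φ' θ‖²`, which turns
`-γ/2 ‖φ' θ‖²` into the contraction `-μγ (φ θ - φ*)`.
-/

open MeasureTheory ProbabilityTheory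
open scoped RealInnerProductSpace

section Smooth

variable {E : Type*} [NormedAddCommGroup E] [InnerProductSpace ℝ E]
  {φ : E → ℝ} {φ' : E → E} {L μ γ : ℝ}

theorem le_add_inner_add_sq_of_lipschitz_gradient
    (hdiff : ∀ θ, HasFDerivAt φ (innerSL ℝ (φ' θ)) θ)
    (hsmooth : ∀ θ θ', ‖φ' θ' - φ' θ‖ ≤ L * ‖θ' - θ‖) (x y : E) :
    φ y ≤ φ x + ⟪φ' x, y - x⟫ + L / 2 * ‖y - x‖ ^ 2 := by
  set d := y - x
  have hline : ∀ t : ℝ, HasDerivAt (fun t : ℝ => φ (x + t • d)) ⟪φ' (x + t • d), d⟫ t := by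
    intro t
    have hpath : HasDerivAt (fun t : ℝ => x + t • d) d t := by
      simpa using ((hasDerivAt_id t).smul_const d).const_add x
    simpa [Function.comp_def] using (hdiff (x + t • d)).comp_hasDerivAt t hpath
  have hquad : ∀ t : ℝ, HasDerivAt (fun t : ℝ => φ x + t * ⟪φ' x, d⟫ + L / 2 * t ^ 2 * ‖d‖ ^ 2)
      (⟪φ' x, d⟫ + L * t * ‖d‖ ^ 2) t := by
    intro t
    refine ((((hasDerivAt_id' t).mul_const ⟪φ' x, d⟫).const_add (φ x)).add
      (((hasDerivAt_pow 2 t).const_mul (L / 2)).mul_const (‖d‖ ^ 2))).congr_deriv ?_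
    push_cast; ring
  have hslope : ∀ t ∈ Set.Ico (0 : ℝ) 1, ⟪φ' (x + t • d), d⟫ ≤ ⟪φ' x, d⟫ + L * t * ‖d‖ ^ 2 := by
    rintro t ⟨ht, -⟩
    have hgrad : ‖φ' (x + t • d) - φ' x‖ ≤ L * (t * ‖d‖) := by
      simpa [norm_smul, abs_of_nonneg ht] using hsmooth x (x + t • d)
    calc ⟪φ' (x + t • d), d⟫ = ⟪φ' x, d⟫ + ⟪φ' (x + t • d) - φ' x, d⟫ := by
          rw [inner_sub_left]; ring
      _ ≤ ⟪φ' x, d⟫ + ‖φ' (x + t • d) - φ' x‖ * ‖d‖ := by gcongr; exact real_inner_le_norm _ _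
      _ ≤ ⟪φ' x, d⟫ + L * (t * ‖d‖) * ‖d‖ := by gcongr
      _ = ⟪φ' x, d⟫ + L * t * ‖d‖ ^ 2 := by ring
  have h := image_le_of_deriv_right_le_deriv_boundary
    (fun t _ => (hline t).continuousAt.continuousWithinAt) (fun t _ => (hline t).hasDerivWithinAt)
    (by simp) (fun t _ => (hquad t).continuousAt.continuousWithinAt)
    (fun t _ => (hquad t).hasDerivWithinAt) hslope (Set.right_mem_Icc.2 zero_le_one)
  simpa [d] using h

theorem two_mul_sub_le_norm_sq_of_strongly_convex
    (hsc : ∀ θ θ', φ θ' ≥ φ θ + ⟪φ' θ, θ' - θ⟫ + μ / 2 * ‖θ' - θ‖ ^ 2) (hμ : 0 ≤ μ) (x z : E) :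
    2 * μ * (φ x - φ z) ≤ ‖φ' x‖ ^ 2 := by
  have h := hsc x z
  have hinner : -(‖φ' x‖ * ‖z - x‖) ≤ ⟪φ' x, z - x⟫ := (abs_le.mp (abs_real_inner_le_norm _ _)).1
  nlinarith [sq_nonneg (‖φ' x‖ - μ * ‖z - x‖)]

theorem apply_noisy_gradient_step_le
    (hdiff : ∀ θ, HasFDerivAt φ (innerSL ℝ (φ' θ)) θ)
    (hsmooth : ∀ θ θ', ‖φ' θ' - φ' θ‖ ≤ L * ‖θ' - θ‖) (hγ : 0 ≤ γ) (hγL : γ * L ≤ 1) (x u : E) :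
    φ (x - γ • (φ' x + u)) ≤ φ x - γ / 2 * ‖φ' x‖ ^ 2 + (L * γ ^ 2 - γ) * ⟪φ' x, u⟫
      + L * γ ^ 2 / 2 * ‖u‖ ^ 2 := by
  have h := le_add_inner_add_sq_of_lipschitz_gradient hdiff hsmooth x (x - γ • (φ' x + u))
  rw [sub_sub_cancel_left, inner_neg_right, norm_neg, real_inner_smul_right, norm_smul,
    Real.norm_of_nonneg hγ, mul_pow, inner_add_right, norm_add_sq_real,
    real_inner_self_eq_norm_sq] at h
  nlinarith [mul_nonneg (mul_nonneg hγ (sub_nonneg.2 hγL)) (sq_nonneg ‖φ' x‖)]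

theorem half_mul_norm_sq_gradient_le_sub_of_le
    (hdiff : ∀ θ, HasFDerivAt φ (innerSL ℝ (φ' θ)) θ)
    (hsmooth : ∀ θ θ', ‖φ' θ' - φ' θ‖ ≤ L * ‖θ' - θ‖) (hγ : 0 ≤ γ) (hγL : γ * L ≤ 1)
    {c : ℝ} (hc : ∀ θ, c ≤ φ θ) (x : E) :
    γ / 2 * ‖φ' x‖ ^ 2 ≤ φ x - c := by
  have h := apply_noisy_gradient_step_le hdiff hsmooth hγ hγL x 0
  simp only [add_zero, inner_zero_right, norm_zero, mul_zero] at h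
  linarith [hc (x - γ • φ' x)]

end Smooth

section CondExp

variable {Ω E : Type*} {m mΩ : MeasurableSpace Ω} {μ : Measure Ω}
  [NormedAddCommGroup E] [InnerProductSpace ℝ E]

theorem MemLp.integrable_inner {f g : Ω → E} (hf : MemLp f 2 μ) (hg : MemLp g 2 μ) :
    Integrable (fun ω => ⟪f ω, g ω⟫) μ :=
  (L2.integrable_inner (hf.toLp f) (hg.toLp g)).congr <| by
    filter_upwards [hf.coeFn_toLp, hg.coeFn_toLp] with ω hfω hgω
    rw [hfω, hgω]

theorem integral_inner_eq_zero_of_condExp_ae_eq_zero [CompleteSpace E] [IsFiniteMeasure μ]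
    (hm : m ≤ mΩ) {f g : Ω → E} (hf : StronglyMeasurable[m] f)
    (hfg : Integrable (fun ω => ⟪f ω, g ω⟫) μ) (hg : Integrable g μ) (hg0 : μ[g | m] =ᵐ[μ] 0) :
    ∫ ω, ⟪f ω, g ω⟫ ∂μ = 0 := by
  have hpull := condExp_bilin_of_stronglyMeasurable_left
    (innerSL ℝ (E := E) : E →L[ℝ] E →L[ℝ] ℝ) hf hfg hg
  calc ∫ ω, ⟪f ω, g ω⟫ ∂μ = ∫ ω, (μ[fun ω => ⟪f ω, g ω⟫ | m]) ω ∂μ := (integral_condExp hm).symm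
    _ = ∫ ω, ⟪f ω, (μ[g | m]) ω⟫ ∂μ := integral_congr_ae hpull
    _ = ∫ _, (0 : ℝ) ∂μ := integral_congr_ae <| hg0.mono fun ω hω => by simp [hω]
    _ = 0 := integral_zero _ _

end CondExp

section Expectation

variable {E Ω : Type*} [NormedAddCommGroup E] [InnerProductSpace ℝ E] [MeasurableSpace Ω]
  {P : Measure Ω} {φ : E → ℝ} {φ' : E → E} {L μ γ : ℝ} {θ ξ : Ω → E}

theorem integrable_norm_sq_gradient_comp [IsFiniteMeasure P]
    (hdiff : ∀ θ, HasFDerivAt φ (innerSL ℝ (φ' θ)) θ)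
    (hsmooth : ∀ θ θ', ‖φ' θ' - φ' θ‖ ≤ L * ‖θ' - θ‖) (hγ : 0 < γ) (hγL : γ * L ≤ 1)
    {c : ℝ} (hc : ∀ θ, c ≤ φ θ) (hgrad : AEStronglyMeasurable (fun ω => φ' (θ ω)) P)
    (hφθ : Integrable (fun ω => φ (θ ω)) P) :
    Integrable (fun ω => ‖φ' (θ ω)‖ ^ 2) P := by
  refine ((hφθ.sub (integrable_const c)).const_mul (2 / γ)).mono' (hgrad.norm.pow 2)
    (ae_of_all _ fun ω => ?_)
  rw [Real.norm_of_nonneg (by positivity), Pi.sub_apply, div_mul_eq_mul_div, le_div_iff₀ hγ]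
  linarith [half_mul_norm_sq_gradient_le_sub_of_le hdiff hsmooth hγ.le hγL hc (θ ω)]

theorem integral_apply_noisy_gradient_step_le
    (hdiff : ∀ θ, HasFDerivAt φ (innerSL ℝ (φ' θ)) θ)
    (hsmooth : ∀ θ θ', ‖φ' θ' - φ' θ‖ ≤ L * ‖θ' - θ‖) (hγ : 0 ≤ γ) (hγL : γ * L ≤ 1)
    (hstep : Integrable (fun ω => φ (θ ω - γ • (φ' (θ ω) + ξ ω))) P)
    (hφθ : Integrable (fun ω => φ (θ ω)) P) (hgrad : Integrable (fun ω => ‖φ' (θ ω)‖ ^ 2) P)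
    (hcross : Integrable (fun ω => ⟪φ' (θ ω), ξ ω⟫) P) (hξ : Integrable (fun ω => ‖ξ ω‖ ^ 2) P) :
    ∫ ω, φ (θ ω - γ • (φ' (θ ω) + ξ ω)) ∂P ≤ (∫ ω, φ (θ ω) ∂P)
      - γ / 2 * ∫ ω, ‖φ' (θ ω)‖ ^ 2 ∂P + (L * γ ^ 2 - γ) * ∫ ω, ⟪φ' (θ ω), ξ ω⟫ ∂P
      + L * γ ^ 2 / 2 * ∫ ω, ‖ξ ω‖ ^ 2 ∂P := by
  have hφθ_grad : Integrable (fun ω => φ (θ ω) - γ / 2 * ‖φ' (θ ω)‖ ^ 2) P :=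
    hφθ.sub (hgrad.const_mul _)
  have hφθ_grad_cross : Integrable (fun ω => φ (θ ω) - γ / 2 * ‖φ' (θ ω)‖ ^ 2
      + (L * γ ^ 2 - γ) * ⟪φ' (θ ω), ξ ω⟫) P :=
    hφθ_grad.add (hcross.const_mul _)
  calc ∫ ω, φ (θ ω - γ • (φ' (θ ω) + ξ ω)) ∂P
      ≤ ∫ ω, (φ (θ ω) - γ / 2 * ‖φ' (θ ω)‖ ^ 2 + (L * γ ^ 2 - γ) * ⟪φ' (θ ω), ξ ω⟫
          + L * γ ^ 2 / 2 * ‖ξ ω‖ ^ 2) ∂P :=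
        integral_mono hstep (hφθ_grad_cross.add (hξ.const_mul _))
          fun ω => apply_noisy_gradient_step_le hdiff hsmooth hγ hγL (θ ω) (ξ ω)
    _ = _ := by
      rw [integral_add hφθ_grad_cross (hξ.const_mul _), integral_add hφθ_grad (hcross.const_mul _),
        integral_sub hφθ (hgrad.const_mul _), integral_const_mul, integral_const_mul,
        integral_const_mul]

theorem two_mul_integral_sub_le_integral_norm_sq_of_strongly_convex [IsProbabilityMeasure P]
    (hsc : ∀ θ θ', φ θ' ≥ φ θ + ⟪φ' θ, θ' - θ⟫ + μ / 2 * ‖θ' - θ‖ ^ 2) (hμ : 0 ≤ μ)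
    (hφθ : Integrable (fun ω => φ (θ ω)) P) (hgrad : Integrable (fun ω => ‖φ' (θ ω)‖ ^ 2) P)
    (z : E) :
    2 * μ * ((∫ ω, φ (θ ω) ∂P) - φ z) ≤ ∫ ω, ‖φ' (θ ω)‖ ^ 2 ∂P :=
  calc 2 * μ * ((∫ ω, φ (θ ω) ∂P) - φ z) = ∫ ω, 2 * μ * (φ (θ ω) - φ z) ∂P := by
        rw [integral_const_mul, integral_sub hφθ (integrable_const _), integral_const,
          probReal_univ, one_smul]
    _ ≤ ∫ ω, ‖φ' (θ ω)‖ ^ 2 ∂P :=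
        integral_mono ((hφθ.sub (integrable_const _)).const_mul _) hgrad
          fun ω => two_mul_sub_le_norm_sq_of_strongly_convex hsc hμ (θ ω) z

end Expectation

theorem sgd_one_step_descent_general {E : Type*} [NormedAddCommGroup E] [InnerProductSpace ℝ E]
    [FiniteDimensional ℝ E] [MeasurableSpace E] [BorelSpace E]
    {Ω : Type*} [MeasureSpace Ω] [IsProbabilityMeasure (ℙ : Measure Ω)]
    (φ : E → ℝ) (φ' : E → E) (L μ : ℝ) (hμ : 0 < μ)
    (hdiff : ∀ θ : E, HasFDerivAt φ (innerSL ℝ (φ' θ)) θ)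
    (hsmooth : ∀ θ θ' : E, ‖φ' θ' - φ' θ‖ ≤ L * ‖θ' - θ‖)
    (hsc : ∀ θ θ' : E, φ θ' ≥ φ θ + ⟪φ' θ, θ' - θ⟫ + μ / 2 * ‖θ' - θ‖ ^ 2)
    (φstar : ℝ) (θstar : E) (hlb : ∀ θ : E, φstar ≤ φ θ) (hatt : φ θstar = φstar)
    (γ : ℝ) (hγ0 : 0 < γ) (hγL : γ ≤ 1 / L)
    (θ ξ : Ω → E) (hθm : Measurable θ)
    (hξint : Integrable ξ ℙ)
    (hcond : ℙ[ξ | MeasurableSpace.comap θ inferInstance] =ᵐ[ℙ] 0)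
    (σ : ℝ) (hξ2int : Integrable (fun ω => ‖ξ ω‖ ^ 2) ℙ)
    (hvar : ∫ ω, ‖ξ ω‖ ^ 2 ∂ℙ ≤ σ ^ 2)
    (hφθint : Integrable (fun ω => φ (θ ω)) ℙ)
    (hφstepint : Integrable (fun ω => φ (θ ω - γ • (φ' (θ ω) + ξ ω))) ℙ) :
    (∫ ω, φ (θ ω - γ • (φ' (θ ω) + ξ ω)) ∂ℙ) - φstar
      ≤ (1 - μ * γ) * ((∫ ω, φ (θ ω) ∂ℙ) - φstar) + L * γ ^ 2 / 2 * σ ^ 2 := by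
  have hL : 0 < L := one_div_pos.mp (hγ0.trans_le hγL)
  have hγL_mul : γ * L ≤ 1 := (le_div_iff₀ hL).mp hγL
  have hgrad_cont : Continuous φ' := (LipschitzWith.of_dist_le_mul (K := L.toNNReal) fun a b => by
    simpa [dist_eq_norm, Real.coe_toNNReal _ hL.le] using hsmooth b a).continuous
  have hgrad_meas : StronglyMeasurable[MeasurableSpace.comap θ inferInstance] (fun ω => φ' (θ ω)) :=
    (hgrad_cont.measurable.comp (comap_measurable θ)).stronglyMeasurable
  have hgrad_ae : AEStronglyMeasurable (fun ω => φ' (θ ω)) ℙ :=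
    (hgrad_cont.measurable.comp hθm).aestronglyMeasurable
  have hgrad_sq := integrable_norm_sq_gradient_comp hdiff hsmooth hγ0 hγL_mul hlb hgrad_ae hφθint
  have hcross_int : Integrable (fun ω => ⟪φ' (θ ω), ξ ω⟫) ℙ :=
    MemLp.integrable_inner ((memLp_two_iff_integrable_sq_norm hgrad_ae).2 hgrad_sq)
      ((memLp_two_iff_integrable_sq_norm hξint.1).2 hξ2int)
  have hcross : ∫ ω, ⟪φ' (θ ω), ξ ω⟫ ∂ℙ = 0 :=
    integral_inner_eq_zero_of_condExp_ae_eq_zero hθm.comap_le hgrad_meas hcross_int hξint hcond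
  have hdescent := integral_apply_noisy_gradient_step_le hdiff hsmooth hγ0.le hγL_mul
    hφstepint hφθint hgrad_sq hcross_int hξ2int
  have hPL := two_mul_integral_sub_le_integral_norm_sq_of_strongly_convex hsc hμ.le hφθint
    hgrad_sq θstar
  rw [hcross, mul_zero, add_zero] at hdescent
  rw [hatt] at hPL
  linarith [mul_le_mul_of_nonneg_left hPL (by positivity : 0 ≤ γ / 2),
    mul_le_mul_of_nonneg_left hvar (by positivity : 0 ≤ L * γ ^ 2 / 2)]

/-- **One-step descent for an unbiased stochastic gradient step.** Let `E` be a
finite-dimensional real inner product space and `φ : E → ℝ` be differentiable with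
gradient `φ'`, `L`-smooth and `μ`-strongly convex (`μ > 0`), attaining its minimum value
`φ*`. Fix `0 < γ ≤ 1/L`. Let `θ` and `ξ` be random vectors such that `E[ξ | θ] = 0` and
`E[‖ξ‖²] ≤ σ²`. Then
`E[φ(θ - γ(∇φ(θ) + ξ))] - φ* ≤ (1 - μγ)(E[φ(θ)] - φ*) + (Lγ²/2)σ²`. -/
theorem sgd_one_step_descent {E : Type*} [NormedAddCommGroup E] [InnerProductSpace ℝ E]
    [FiniteDimensional ℝ E] [MeasurableSpace E] [BorelSpace E]
    {Ω : Type*} [MeasureSpace Ω] [IsProbabilityMeasure (ℙ : Measure Ω)]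
    (φ : E → ℝ) (φ' : E → E) (L μ : ℝ) (hμ : 0 < μ)
    (hdiff : ∀ θ : E, HasFDerivAt φ (innerSL ℝ (φ' θ)) θ)
    (hsmooth : ∀ θ θ' : E, ‖φ' θ' - φ' θ‖ ≤ L * ‖θ' - θ‖)
    (hsc : ∀ θ θ' : E, φ θ' ≥ φ θ + ⟪φ' θ, θ' - θ⟫ + μ / 2 * ‖θ' - θ‖ ^ 2)
    (φstar : ℝ) (θstar : E) (hlb : ∀ θ : E, φstar ≤ φ θ) (hatt : φ θstar = φstar)
    (γ : ℝ) (hγ0 : 0 < γ) (hγL : γ ≤ 1 / L)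
    (θ ξ : Ω → E) (hθm : Measurable θ) (hξm : Measurable ξ)
    (hξint : Integrable ξ ℙ)
    (hcond : ℙ[ξ | MeasurableSpace.comap θ inferInstance] =ᵐ[ℙ] 0)
    (σ : ℝ) (hξ2int : Integrable (fun ω => ‖ξ ω‖ ^ 2) ℙ)
    (hvar : ∫ ω, ‖ξ ω‖ ^ 2 ∂ℙ ≤ σ ^ 2)
    (hφθint : Integrable (fun ω => φ (θ ω)) ℙ)
    (hφstepint : Integrable (fun ω => φ (θ ω - γ • (φ' (θ ω) + ξ ω))) ℙ) :
    (∫ ω, φ (θ ω - γ • (φ' (θ ω) + ξ ω)) ∂ℙ) - φstar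
      ≤ (1 - μ * γ) * ((∫ ω, φ (θ ω) ∂ℙ) - φstar) + L * γ ^ 2 / 2 * σ ^ 2 :=
  sgd_one_step_descent_general φ φ' L μ hμ hdiff hsmooth hsc φstar θstar hlb hatt γ hγ0 hγL θ ξ hθm
    hξint hcond σ hξ2int hvar hφθint hφstepint
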